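/- If a stochastic choice function p is rationalizable on a menu M by an MSC model whose matrix Q(M) is irreducible, then there exists a closed walk covering M such that p(·|M) is bounded in a cycle over every ordered pair appearing in the walk. -/

import Mathlib

open Finset

variable {X : Type*} [DecidableEq X]

/-- The menus relevant to an MSC model on `M`: `M` itself and the two-element subsets of `M`. -/
def RelMenu (M N : Finset X) : Prop := N = M ∨ (N ⊆ M ∧ N.card = 2)

/-- `Q` is row-stochastic on `N`: nonnegative entries, rows summing to 1. -/
def RowStochOn (N : Finset X) (Q : X → X → ℝ) : Prop :=
  (∀ i ∈ N, ∀ j ∈ N, 0 ≤ Q i j) ∧ ∀ i ∈ N, ∑ j ∈ N, Q i j = 1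

/-- The axioms of an MSC model on the menu `M`: row-stochasticity on relevant menus,
(A1) prolonged consideration, (A2) pairwise comparability on binary sets, (A3) TR-IIA. -/
def IsMSC (M : Finset X) (q : Finset X → X → X → ℝ) : Prop :=
  (∀ N, RelMenu M N → RowStochOn N (q N)) ∧
  (∀ N, RelMenu M N → ∀ i ∈ N, 0 < q N i i) ∧
  (∀ i ∈ M, ∀ j ∈ M, i ≠ j → q {i, j} i j = 0 → 0 < q {i, j} j i) ∧
  (∀ N, RelMenu M N → ∀ i ∈ N, ∀ j ∈ N, i ≠ j →
    q {i, j} i j * q N j i = q {i, j} j i * q N i j)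

/-- `p` is a stochastic choice function. -/
def IsSCF (p : Finset X → X → ℝ) : Prop :=
  ∀ N : Finset X, N.Nonempty →
    (∀ i, 0 ≤ p N i) ∧ (∀ i, i ∉ N → p N i = 0) ∧ ∑ i ∈ N, p N i = 1

/-- `σ` is a stationary (row) vector of `Q` on `N`, i.e. `σ (I - Q) = 0` on `N`. -/
def StationaryOn (N : Finset X) (Q : X → X → ℝ) (σ : X → ℝ) : Prop :=
  ∀ j ∈ N, ∑ i ∈ N, σ i * Q i j = σ j

/-- The MSC model `q` rationalizes `p` on the menu `M`. -/
def Rationalizes (M : Finset X) (q : Finset X → X → X → ℝ) (p : Finset X → X → ℝ) : Prop :=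
  IsMSC M q ∧ ∀ N, RelMenu M N → StationaryOn N (q N) (p N)

/-- The weighted difference in choice probabilities `δ_ij(M)`. -/
def delta (p : Finset X → X → ℝ) (M : Finset X) (i j : X) : ℝ :=
  p M i * p {i, j} j - p {i, j} i * p M j

/-- The set of ordered pairs of consecutive elements (with wrap-around) of a list. -/
def cyclePairs (c : List X) : List (X × X) := c.zip (c.rotate 1)

/-- `c` is a cycle of distinct alternatives lying in (a subset of) `M`. -/
def IsCycleIn (M : Finset X) (c : List X) : Prop :=
  c.Nodup ∧ 2 ≤ c.length ∧ ∀ x ∈ c, x ∈ M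

/-- All pairs of the cycle have strictly positive `δ`. -/
def PosConsistent (p : Finset X → X → ℝ) (M : Finset X) (c : List X) : Prop :=
  ∀ pr ∈ cyclePairs c, 0 < delta p M pr.1 pr.2

/-- All pairs of the cycle have strictly negative `δ`. -/
def NegConsistent (p : Finset X → X → ℝ) (M : Finset X) (c : List X) : Prop :=
  ∀ pr ∈ cyclePairs c, delta p M pr.1 pr.2 < 0

/-- `p(·|M)` is bounded in a cycle over the pair `(i, j)`. -/
def BoundedInCycle (p : Finset X → X → ℝ) (M : Finset X) (i j : X) : Prop :=
  delta p M i j = 0 ∨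
    ∃ c : List X, IsCycleIn M c ∧ (i, j) ∈ cyclePairs c ∧
      (PosConsistent p M c ∨ NegConsistent p M c)


/-- A single transition of strictly positive probability within `N`. -/
def StepIn (N : Finset X) (Q : X → X → ℝ) (i j : X) : Prop :=
  i ∈ N ∧ j ∈ N ∧ 0 < Q i j

/-- `j` can be reached from `i` by a finite sequence of strictly positive transitions in `N`. -/
def ReachIn (N : Finset X) (Q : X → X → ℝ) : X → X → Prop :=
  Relation.ReflTransGen (StepIn N Q)

/-- `i` and `j` communicate in `N` under `Q`. -/
def CommIn (N : Finset X) (Q : X → X → ℝ) (i j : X) : Prop :=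
  ReachIn N Q i j ∧ ReachIn N Q j i

/-!
The net flow `f i j = p(i|M) q_ij(M) - p(j|M) q_ji(M)` of `Q(M)` in its stationary distribution
`p(·|M)` is antisymmetric and divergence-free. Balance of the binary chain on `{i, j}` together
with TR-IIA gives `δ_ij(M) · m₁ = m₂ · f i j` with `m₁, m₂ > 0` as soon as `q_ij(M) > 0` or
`q_ji(M) > 0`, so along transitions of `Q(M)` the sign of `δ` is the direction of the net flow.
A divergence-free flow decomposes into cycles: an edge carrying positive flow lies on a simple
cycle all of whose edges carry positive flow, and such a cycle is sign-consistent. Irreducibility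
(with the self-loops given by (A1)) yields a closed walk covering `M` along positive transitions,
and each of its pairs is therefore bounded in a cycle.
-/

namespace List

variable {α : Type*} {r : α → α → Prop}

theorem exists_nodup_isChain_of_reflTransGen {a b : α} (h : Relation.ReflTransGen r a b)
    (hab : a ≠ b) : ∃ l, (a :: l ++ [b]).Nodup ∧ IsChain r (a :: l ++ [b]) := by
  induction h using Relation.ReflTransGen.head_induction_on with
  | refl => exact absurd rfl hab
  | @head a c hac hcb ih =>
    by_cases hc : c = b
    · subst hc
      exact ⟨[], by simpa using hab, isChain_pair.2 hac⟩
    obtain ⟨l, hnd, hch⟩ := ih hc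
    by_cases ha : a ∈ c :: l
    · -- cut the path at the second visit to `a`
      obtain ⟨s, t, hst⟩ := append_of_mem ha
      have hsplit : c :: l ++ [b] = s ++ (a :: t ++ [b]) := by rw [hst]; simp
      rw [hsplit] at hnd hch
      exact ⟨t, hnd.of_append_right, hch.right_of_append⟩
    · refine ⟨c :: l, ?_, hch.cons_cons hac⟩
      simpa [hab] using And.intro ha hnd

theorem exists_isChain_of_reflTransGen {a b : α} (h : Relation.ReflTransGen r a b)
    (hb : r b b) : ∃ l, IsChain r (a :: l ++ [b]) := by
  by_cases hab : a = b
  · subst hab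
    exact ⟨[], isChain_pair.2 hb⟩
  · obtain ⟨l, -, hl⟩ := exists_nodup_isChain_of_reflTransGen h hab
    exact ⟨l, hl⟩

theorem exists_closed_isChain_covering {s : Finset α} (hrefl : ∀ x ∈ s, r x x)
    (hconn : ∀ x ∈ s, ∀ y ∈ s, Relation.ReflTransGen r x y) {a : α} (ha : a ∈ s) :
    ∃ l, IsChain r (a :: l ++ [a]) ∧ ∀ x ∈ s, x ∈ a :: l := by
  suffices ∀ t ⊆ s, ∃ l, IsChain r (a :: l ++ [a]) ∧ ∀ x ∈ t, x ∈ a :: l from this s subset_rfl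
  intro t
  induction t using Finset.cons_induction with
  | empty => exact fun _ => ⟨[], isChain_pair.2 (hrefl a ha), by simp⟩
  | cons x t hxt ih =>
    intro hts
    rw [Finset.cons_subset] at hts
    obtain ⟨l, hl, hcov⟩ := ih hts.2
    obtain ⟨l₁, h₁⟩ := exists_isChain_of_reflTransGen (hconn a ha x hts.1) (hrefl x hts.1)
    obtain ⟨l₂, h₂⟩ := exists_isChain_of_reflTransGen (hconn x hts.1 a ha) (hrefl a ha)
    refine ⟨l₁ ++ x :: l₂ ++ a :: l, ?_, ?_⟩
    · have h₁₂ := IsChain.append_overlap (l₁ := a :: l₁) (l₂ := [x]) (l₃ := l₂ ++ [a])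
        (by simpa using h₁) (by simpa using h₂) (by simp)
      have := IsChain.append_overlap (l₁ := a :: l₁ ++ x :: l₂) (l₂ := [a]) (l₃ := l ++ [a])
        (by simpa using h₁₂) (by simpa using hl) (by simp)
      simpa using this
    · intro y hy
      rw [Finset.mem_cons] at hy
      rcases hy with rfl | hy
      · simp
      · have := hcov y hy
        simp only [mem_cons, mem_append] at this ⊢
        tauto

end List

section CyclePairs

variable {α : Type*} {r : α → α → Prop}

theorem cyclePairs_cons (a : α) (l : List α) :
    cyclePairs (a :: l) = (a :: l).zip (l ++ [a]) := by
  simp [cyclePairs]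

theorem forall_mem_cyclePairs_iff_isChain {a : α} {l : List α} :
    (∀ pr ∈ cyclePairs (a :: l), r pr.1 pr.2) ↔ List.IsChain r (a :: l ++ [a]) := by
  rw [List.isChain_cons_append_singleton_iff_forall₂, List.forall₂_iff_zip, cyclePairs_cons]
  simp

theorem exists_rel_of_forall_mem_cyclePairs {c : List α}
    (h : ∀ pr ∈ cyclePairs c, r pr.1 pr.2) {x : α} (hx : x ∈ c) : ∃ y, r x y := by
  rw [← List.map_fst_zip (c.length_rotate 1).ge] at hx
  obtain ⟨pr, hpr, rfl⟩ := List.mem_map.1 hx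
  exact ⟨pr.2, h pr hpr⟩

end CyclePairs

section Flow

variable {α : Type*} {s : Finset α} {f : α → α → ℝ}

theorem sum_sum_eq_zero_of_antisymm (hanti : ∀ i j, f i j = -f j i) (t : Finset α) :
    ∑ j ∈ t, ∑ i ∈ t, f i j = 0 := by
  have h : ∑ j ∈ t, ∑ i ∈ t, f i j = -∑ j ∈ t, ∑ i ∈ t, f i j :=
    calc ∑ j ∈ t, ∑ i ∈ t, f i j = ∑ i ∈ t, ∑ j ∈ t, f i j := sum_comm
      _ = ∑ i ∈ t, ∑ j ∈ t, -f j i := sum_congr rfl fun i _ => sum_congr rfl fun j _ => hanti i j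
      _ = -∑ j ∈ t, ∑ i ∈ t, f i j := by simp only [sum_neg_distrib]
  linarith

theorem sum_sum_sdiff_eq_zero_of_antisymm [DecidableEq α] (hanti : ∀ i j, f i j = -f j i)
    (hdiv : ∀ j ∈ s, ∑ i ∈ s, f i j = 0) {t : Finset α} (hts : t ⊆ s) :
    ∑ j ∈ t, ∑ i ∈ s \ t, f i j = 0 := by
  have hsplit : ∑ j ∈ t, ∑ i ∈ s, f i j
      = ∑ j ∈ t, ∑ i ∈ s \ t, f i j + ∑ j ∈ t, ∑ i ∈ t, f i j := by
    rw [← sum_add_distrib]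
    exact sum_congr rfl fun j _ => (sum_sdiff hts).symm
  rw [sum_eq_zero fun j hj => hdiv j (hts hj), sum_sum_eq_zero_of_antisymm hanti] at hsplit
  linarith

/-- A divergence-free flow can carry positive flow from `i` to `j` only if it can return from `j`
to `i`: otherwise the states reachable from `j` would receive a positive net inflow. -/
theorem reachIn_of_flow_pos (hanti : ∀ i j, f i j = -f j i) (hdiv : ∀ j ∈ s, ∑ i ∈ s, f i j = 0)
    {i j : α} (hi : i ∈ s) (hj : j ∈ s) (hpos : 0 < f i j) : ReachIn s f j i := by
  classical
  by_contra hji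
  set t := s.filter (ReachIn s f j)
  have hts : t ⊆ s := filter_subset _ _
  have hjt : j ∈ t := mem_filter.2 ⟨hj, Relation.ReflTransGen.refl⟩
  have hinflow : ∀ y ∈ t, ∀ x ∈ s \ t, 0 ≤ f x y := by
    intro y hy x hx
    obtain ⟨hxs, hxt⟩ := mem_sdiff.1 hx
    by_contra hneg
    have hyx : StepIn s f y x := ⟨hts hy, hxs, by linarith [hanti x y]⟩
    exact hxt (mem_filter.2 ⟨hxs, (mem_filter.1 hy).2.tail hyx⟩)
  have hi' : i ∈ s \ t := mem_sdiff.2 ⟨hi, fun h => hji (mem_filter.1 h).2⟩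
  have : 0 < ∑ y ∈ t, ∑ x ∈ s \ t, f x y :=
    sum_pos' (fun y hy => sum_nonneg (hinflow y hy))
      ⟨j, hjt, sum_pos' (hinflow j hjt) ⟨i, hi', hpos⟩⟩
  linarith [sum_sum_sdiff_eq_zero_of_antisymm hanti hdiv hts]

theorem exists_cycle_of_flow_pos (hanti : ∀ i j, f i j = -f j i)
    (hdiv : ∀ j ∈ s, ∑ i ∈ s, f i j = 0) {i j : α} (hi : i ∈ s) (hj : j ∈ s) (hpos : 0 < f i j) :
    ∃ c, IsCycleIn s c ∧ (i, j) ∈ cyclePairs c ∧ ∀ pr ∈ cyclePairs c, StepIn s f pr.1 pr.2 := by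
  have hij : i ≠ j := fun h => by subst h; linarith [hanti i i]
  obtain ⟨l, hnd, hch⟩ :=
    List.exists_nodup_isChain_of_reflTransGen (reachIn_of_flow_pos hanti hdiv hi hj hpos) hij.symm
  have hsteps : ∀ pr ∈ cyclePairs (i :: j :: l), StepIn s f pr.1 pr.2 :=
    forall_mem_cyclePairs_iff_isChain.2 (hch.cons_cons ⟨hi, hj, hpos⟩)
  refine ⟨i :: j :: l, ⟨?_, by simp, fun x hx => ?_⟩, by simp [cyclePairs_cons], hsteps⟩
  · exact (List.perm_append_singleton i (j :: l)).nodup_iff.1 hnd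
  · obtain ⟨y, hxy⟩ := exists_rel_of_forall_mem_cyclePairs hsteps hx
    exact hxy.1

end Flow

section NetFlow

variable {α : Type*} {N : Finset α} {Q : α → α → ℝ} {σ : α → ℝ}

def netFlow (σ : α → ℝ) (Q : α → α → ℝ) (i j : α) : ℝ := σ i * Q i j - σ j * Q j i

theorem netFlow_antisymm (i j : α) : netFlow σ Q i j = -netFlow σ Q j i := by
  unfold netFlow; ring

theorem sum_netFlow_eq_zero (hQ : RowStochOn N Q) (hσ : StationaryOn N Q σ) :
    ∀ j ∈ N, ∑ i ∈ N, netFlow σ Q i j = 0 := by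
  intro j hj
  simp only [netFlow, sum_sub_distrib, ← mul_sum, hσ j hj, hQ.2 j hj, mul_one, sub_self]

theorem pos_or_pos_of_netFlow_ne_zero {i j : α} (hij : 0 ≤ Q i j) (hji : 0 ≤ Q j i)
    (h : netFlow σ Q i j ≠ 0) : 0 < Q i j ∨ 0 < Q j i := by
  by_contra! hQ
  exact h (by simp [netFlow, le_antisymm hQ.1 hij, le_antisymm hQ.2 hji])

end NetFlow

section MSC

variable {M : Finset X} {p : Finset X → X → ℝ} {q : Finset X → X → X → ℝ} {i j : X}

theorem relMenu_pair (hi : i ∈ M) (hj : j ∈ M) (hij : i ≠ j) : RelMenu M {i, j} :=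
  Or.inr ⟨insert_subset hi (singleton_subset_iff.2 hj), card_pair hij⟩

theorem pair_balance (hrat : Rationalizes M q p) (hi : i ∈ M) (hj : j ∈ M) (hij : i ≠ j) :
    p {i, j} i * q {i, j} i j = p {i, j} j * q {i, j} j i := by
  have hN := relMenu_pair hi hj hij
  have hstat := hrat.2 _ hN j (by simp)
  have hrow := (hrat.1.1 _ hN).2 j (by simp)
  rw [sum_pair hij] at hstat hrow
  linear_combination hstat - p {i, j} j * hrow

theorem transition_weight_pos (hrat : Rationalizes M q p) (hi : i ∈ M) (hj : j ∈ M) (hij : i ≠ j)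
    (hQ : 0 < q M i j ∨ 0 < q M j i) :
    0 < q {i, j} i j * q M i j + q {i, j} j i * q M j i := by
  obtain ⟨⟨hrow, -, hA2, hA3⟩, -⟩ := hrat
  have hN := relMenu_pair hi hj hij
  have ha := (hrow _ hN).1 i (by simp) j (by simp)
  have hb := (hrow _ hN).1 j (by simp) i (by simp)
  have hQij := (hrow M (Or.inl rfl)).1 i hi j hj
  have hQji := (hrow M (Or.inl rfl)).1 j hj i hi
  have htr := hA3 M (Or.inl rfl) i hi j hj hij
  rcases ha.eq_or_lt with ha0 | ha0
  · have hb0 := hA2 i hi j hj hij ha0.symm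
    rw [← ha0] at htr ⊢
    rcases hQ with hQ | hQ <;> nlinarith
  · rcases hQ with hQ | hQ
    · nlinarith
    · rcases hb.eq_or_lt with hb0 | hb0 <;> nlinarith

theorem pair_weight_pos (hp : IsSCF p) (hrat : Rationalizes M q p) (hi : i ∈ M) (hj : j ∈ M)
    (hij : i ≠ j) : 0 < q {i, j} i j * p {i, j} j + q {i, j} j i * p {i, j} i := by
  have hN := relMenu_pair hi hj hij
  obtain ⟨hπ, -, hsum⟩ := hp {i, j} (insert_nonempty i {j})
  rw [sum_pair hij] at hsum
  have hbal := pair_balance hrat hi hj hij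
  have ha := (hrat.1.1 _ hN).1 i (by simp) j (by simp)
  have hb := (hrat.1.1 _ hN).1 j (by simp) i (by simp)
  have hπi := hπ i
  have hπj := hπ j
  rcases ha.eq_or_lt with ha0 | ha0
  · have hb0 := hrat.1.2.2.1 i hi j hj hij ha0.symm
    rw [← ha0] at hbal ⊢
    have : p {i, j} j = 0 := by nlinarith
    nlinarith
  · rcases hπj.eq_or_lt with hπj0 | hπj0
    · rw [← hπj0] at hbal
      nlinarith
    · nlinarith

theorem sign_delta_eq_sign_netFlow (hp : IsSCF p) (hrat : Rationalizes M q p) (hi : i ∈ M)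
    (hj : j ∈ M) (hQ : 0 < q M i j ∨ 0 < q M j i) :
    SignType.sign (delta p M i j) = SignType.sign (netFlow (p M) (q M) i j) := by
  rcases eq_or_ne i j with rfl | hij
  · rw [show delta p M i i = 0 by unfold delta; ring,
      show netFlow (p M) (q M) i i = 0 by unfold netFlow; ring]
  -- with `a, b, π` the data of the binary menu `{i, j}`, pair balance and TR-IIA give
  -- `a (δ Q_ij - f π_j) = 0` and `b (δ Q_ji - f π_i) = 0`
  have hid : delta p M i j * (q {i, j} i j * q M i j + q {i, j} j i * q M j i)
      = (q {i, j} i j * p {i, j} j + q {i, j} j i * p {i, j} i) * netFlow (p M) (q M) i j := by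
    unfold delta netFlow
    linear_combination (-(p M i * q M j i + p M j * q M i j)) * pair_balance hrat hi hj hij +
      (p M i * p {i, j} i + p M j * p {i, j} j) * hrat.1.2.2.2 M (Or.inl rfl) i hi j hj hij
  have := congrArg SignType.sign hid
  rwa [sign_mul, sign_mul, sign_pos (transition_weight_pos hrat hi hj hij hQ),
    sign_pos (pair_weight_pos hp hrat hi hj hij), mul_one, one_mul] at this

theorem boundedInCycle_of_pos (hp : IsSCF p) (hrat : Rationalizes M q p) {x y : X} (hx : x ∈ M)
    (hy : y ∈ M) (hxy : 0 < q M x y) : BoundedInCycle p M x y := by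
  set f := netFlow (p M) (q M)
  have hanti : ∀ u v, f u v = -f v u := netFlow_antisymm
  have hdiv : ∀ j ∈ M, ∑ i ∈ M, f i j = 0 :=
    sum_netFlow_eq_zero (hrat.1.1 M (Or.inl rfl)) (hrat.2 M (Or.inl rfl))
  have hQ := (hrat.1.1 M (Or.inl rfl)).1
  have hsign {u v : X} (hu : u ∈ M) (hv : v ∈ M) (huv : f u v ≠ 0) :
      SignType.sign (delta p M u v) = SignType.sign (f u v) :=
    sign_delta_eq_sign_netFlow hp hrat hu hv
      (pos_or_pos_of_netFlow_ne_zero (hQ u hu v hv) (hQ v hv u hu) huv)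
  rcases lt_trichotomy (f x y) 0 with hneg | hzero | hpos
  · obtain ⟨c, hc, hxyc, hsteps⟩ := exists_cycle_of_flow_pos (f := fun u v => -f u v)
      (fun u v => by rw [hanti u v]) (fun j hj => by rw [sum_neg_distrib, hdiv j hj, neg_zero])
      hx hy (neg_pos.2 hneg)
    refine Or.inr ⟨c, hc, hxyc, Or.inr fun pr hpr => ?_⟩
    obtain ⟨h1, h2, hpos⟩ := hsteps pr hpr
    have hneg : f pr.1 pr.2 < 0 := neg_pos.1 hpos
    exact sign_eq_neg_one_iff.1 ((hsign h1 h2 hneg.ne).trans (sign_eq_neg_one_iff.2 hneg))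
  · left
    have : SignType.sign (delta p M x y) = SignType.sign (f x y) :=
      sign_delta_eq_sign_netFlow hp hrat hx hy (Or.inl hxy)
    rwa [hzero, sign_zero, sign_eq_zero_iff] at this
  · obtain ⟨c, hc, hxyc, hsteps⟩ := exists_cycle_of_flow_pos hanti hdiv hx hy hpos
    refine Or.inr ⟨c, hc, hxyc, Or.inl fun pr hpr => ?_⟩
    obtain ⟨h1, h2, hpos⟩ := hsteps pr hpr
    exact sign_eq_one_iff.1 ((hsign h1 h2 hpos.ne').trans (sign_eq_one_iff.2 hpos))

end MSC

/-- If `p` is rationalizable on `M` by an MSC model whose matrix `Q(M)` is irreducible,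
then there is a closed walk covering `M` such that `p(·|M)` is bounded in a cycle over
every ordered pair appearing in the walk. -/
theorem stmt14 (M : Finset X) (hM : M.Nonempty)
    (p : Finset X → X → ℝ) (hp : IsSCF p)
    (q : Finset X → X → X → ℝ) (hrat : Rationalizes M q p)
    (hirr : ∀ i ∈ M, ∀ j ∈ M, ReachIn M (q M) i j) :
    ∃ c : List X, c ≠ [] ∧ c.toFinset = M ∧
      ∀ pr ∈ cyclePairs c, BoundedInCycle p M pr.1 pr.2 := by
  obtain ⟨a, ha⟩ := hM
  -- (A1) makes every state a self-loop of `Q(M)`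
  have hrefl : ∀ x ∈ M, StepIn M (q M) x x := fun x hx => ⟨hx, hx, hrat.1.2.1 M (Or.inl rfl) x hx⟩
  obtain ⟨l, hl, hcov⟩ := List.exists_closed_isChain_covering hrefl hirr ha
  have hsteps := forall_mem_cyclePairs_iff_isChain.2 hl
  refine ⟨a :: l, List.cons_ne_nil a l, ?_, fun pr hpr => ?_⟩
  · ext x
    rw [List.mem_toFinset]
    exact ⟨fun hx => (exists_rel_of_forall_mem_cyclePairs hsteps hx).choose_spec.1, hcov x⟩
  · obtain ⟨h1, h2, hpos⟩ := hsteps pr hpr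
    exact boundedInCycle_of_pos hp hrat h1 h2 hpos
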